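/- Let L be a finite-dimensional Lie algebra over a field of characteristic p > 0. Any two minimal p-envelopes of L (those of minimal dimension among all finite-dimensional p-envelopes) are isomorphic as ordinary Lie algebras. -/

import Mathlib

open scoped TensorProduct

/-- Iterated adjoint action: `adIter z n w = (ad z)^n w`. -/
def adIter {L : Type*} [LieRing L] (z : L) : ℕ → L → L
  | 0, w => w
  | n+1, w => ⁅z, adIter z n w⁆

/-- A `p`-semilinear map between `F`-vector spaces. -/
def IsPSemilinear (p : ℕ) (F : Type*) [Field F] {V W : Type*}
    [AddCommGroup V] [Module F V] [AddCommGroup W] [Module F W] (f : V → W) : Prop :=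
  ∀ (a : F) (x y : V), f (a • x + y) = a ^ p • f x + f y

/-- `pm` is a `p`-mapping on the Lie algebra `L` over `F`. -/
structure IsPMap (p : ℕ) (F : Type*) [Field F] (L : Type*) [LieRing L] [LieAlgebra F L]
    (pm : L → L) : Prop where
  ad_pow : ∀ a x : L, ⁅pm a, x⁆ = adIter a p x
  smul_pow : ∀ (c : F) (a : L), pm (c • a) = c ^ p • pm a
  add_pow : ∀ a b : L, ∃ s : Fin (p - 1) → L,
    adIter ((Polynomial.X : Polynomial F) ⊗ₜ[F] a + (1 : Polynomial F) ⊗ₜ[F] b) (p - 1)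
        ((1 : Polynomial F) ⊗ₜ[F] a)
      = (∑ j : Fin (p - 1), ((j : ℕ) + 1) •
          (((Polynomial.X : Polynomial F) ^ (j : ℕ)) ⊗ₜ[F] s j)) ∧
    pm (a + b) = pm a + pm b + ∑ j : Fin (p - 1), s j

/-- `H` is a `p`-subalgebra w.r.t. the map `pm`. -/
def IsPSubalgebra (F : Type*) [Field F] {L : Type*} [LieRing L] [LieAlgebra F L]
    (pm : L → L) (H : LieSubalgebra F L) : Prop :=
  ∀ x ∈ H, pm x ∈ H

/-- The `p`-subalgebra generated by a set `S`. -/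
def pSpan (F : Type*) [Field F] {L : Type*} [LieRing L] [LieAlgebra F L]
    (pm : L → L) (S : Set L) : LieSubalgebra F L :=
  sInf {H : LieSubalgebra F L | IsPSubalgebra F pm H ∧ S ⊆ H}

/-- An element `x` is semisimple if it lies in the `p`-subalgebra generated by `pm x`. -/
def IsSemisimpleElt (F : Type*) [Field F] {L : Type*} [LieRing L] [LieAlgebra F L]
    (pm : L → L) (x : L) : Prop :=
  x ∈ pSpan F pm {pm x}

/-- An element is `p`-nilpotent if some iterate of the `p`-map kills it. -/
def IsPNilpotentElt {L : Type*} (pm : L → L) [Zero L] (x : L) : Prop :=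
  ∃ n : ℕ, pm^[n] x = 0

universe u

/-- A `p`-envelope of a Lie algebra `L`: a restricted Lie algebra together with an injective
Lie homomorphism from `L` whose image generates it as a `p`-subalgebra. -/
structure PEnvelope (p : ℕ) (F : Type u) [Field F] (L : Type u) [LieRing L]
    [LieAlgebra F L] where
  carrier : Type u
  [lieRing : LieRing carrier]
  [lieAlg : LieAlgebra F carrier]
  pm : carrier → carrier
  isPMap : IsPMap p F carrier pm
  incl : L →ₗ⁅F⁆ carrier
  injective : Function.Injective incl
  generates : pSpan F pm (Set.range incl) = ⊤

attribute [instance] PEnvelope.lieRing PEnvelope.lieAlg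

/-- A finite-dimensional `p`-envelope is minimal if its dimension is least among the
dimensions of all finite-dimensional `p`-envelopes of `L`. -/
def PEnvelope.IsMinimal {p : ℕ} {F : Type u} [Field F] {L : Type u} [LieRing L]
    [LieAlgebra F L] (E : PEnvelope p F L) : Prop :=
  FiniteDimensional F E.carrier ∧
    ∀ E' : PEnvelope p F L, FiniteDimensional F E'.carrier →
      Module.finrank F E.carrier ≤ Module.finrank F E'.carrier

/-!
A `p`-envelope `E` of `L` satisfies `[E, E] ⊆ L`, so `E` acts on `L` by brackets. This gives a
Lie map `toEnd : E → End L` with central kernel, onto the `p`-subalgebra `A` of `End L` generated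
by `ad L`. Fix a complement `B` of `ad L` in `A` and a linear lift `σ : B → E`. Then `L ⊕ σ(B)`
is a Lie subalgebra of `E`, and it becomes a `p`-envelope once the `p`-map is projected onto it
along central elements. Hence every minimal envelope has dimension `dim L + dim B`. For two
minimal envelopes `E` and `E'`, the same construction inside the `p`-subalgebra of `E × E'`
generated by the diagonal copy of `L` gives a Lie algebra of that dimension which maps
injectively, hence isomorphically, onto both `E` and `E'`.
-/

attribute [local instance] LieRing.ofAssociativeRing

section AdIter

variable {M N : Type*} [LieRing M] [LieRing N]

theorem adIter_succ' (z : M) (n : ℕ) (w : M) : adIter z (n + 1) w = adIter z n ⁅z, w⁆ := by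
  induction n with
  | zero => rfl
  | succ n ih => exact congrArg (⁅z, ·⁆) ih

theorem map_adIter (f : M → N) (hf : ∀ x y, f ⁅x, y⁆ = ⁅f x, f y⁆) (z : M) (n : ℕ) (w : M) :
    f (adIter z n w) = adIter (f z) n (f w) := by
  induction n with
  | zero => rfl
  | succ n ih => exact (hf _ _).trans (congrArg (⁅f z, ·⁆) ih)

theorem adIter_mem {S : Set M} {z w : M} (hw : w ∈ S) (hz : ∀ y ∈ S, ⁅z, y⁆ ∈ S) (n : ℕ) :
    adIter z n w ∈ S := by
  induction n with
  | zero => exact hw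
  | succ n ih => exact hz _ ih

theorem fst_adIter (z w : M × N) (n : ℕ) : (adIter z n w).1 = adIter z.1 n w.1 :=
  map_adIter Prod.fst (fun _ _ => rfl) z n w

theorem snd_adIter (z w : M × N) (n : ℕ) : (adIter z n w).2 = adIter z.2 n w.2 :=
  map_adIter Prod.snd (fun _ _ => rfl) z n w

end AdIter

section PSpan

variable {F : Type*} [Field F] {M N : Type*} [LieRing M] [LieAlgebra F M] [LieRing N]
  [LieAlgebra F N] {pm : M → M} {S : Set M}

theorem mem_pSpan_iff {x : M} :
    x ∈ pSpan F pm S ↔ ∀ K : LieSubalgebra F M, IsPSubalgebra F pm K → S ⊆ K → x ∈ K := by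
  rw [pSpan, ← SetLike.mem_coe, LieSubalgebra.coe_sInf, Set.mem_iInter₂]
  exact ⟨fun h K hK hS => h K ⟨hK, hS⟩, fun h K hK => h K hK.1 hK.2⟩

theorem subset_pSpan : S ⊆ pSpan F pm S := fun _ hx =>
  mem_pSpan_iff.2 fun _ _ hS => hS hx

theorem pSpan_le {K : LieSubalgebra F M} (hK : IsPSubalgebra F pm K) (hS : S ⊆ K) :
    pSpan F pm S ≤ K :=
  fun _ hx => mem_pSpan_iff.1 hx K hK hS

theorem isPSubalgebra_pSpan : IsPSubalgebra F pm (pSpan F pm S) := fun _ hx =>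
  mem_pSpan_iff.2 fun _ hK hS => hK _ (pSpan_le hK hS hx)

theorem map_pSpan (f : M →ₗ⁅F⁆ N) {pmN : N → N} (hf : ∀ x, f (pm x) = pmN (f x)) :
    (pSpan F pm S).map f = pSpan F pmN (f '' S) := by
  apply le_antisymm
  · rw [LieSubalgebra.map_le_iff_le_comap]
    refine pSpan_le (fun x hx => ?_) fun x hx => subset_pSpan ⟨x, hx, rfl⟩
    rw [LieSubalgebra.mem_comap, hf]
    exact isPSubalgebra_pSpan _ hx
  · refine pSpan_le ?_ (Set.image_mono subset_pSpan)
    rintro _ ⟨x, hx, rfl⟩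
    exact ⟨pm x, isPSubalgebra_pSpan x hx, hf x⟩

theorem lie_mem_of_mem_pSpan {p : ℕ} (hpm : ∀ a x : M, ⁅pm a, x⁆ = adIter a p x) (hp : p ≠ 0)
    {P Q : Submodule F M} (hQP : Q ≤ P) (hS : ∀ s ∈ S, ∀ y ∈ P, ⁅s, y⁆ ∈ Q) {x : M}
    (hx : x ∈ pSpan F pm S) {y : M} (hy : y ∈ P) : ⁅x, y⁆ ∈ Q := by
  let K : LieSubalgebra F M :=
    { carrier := {x | ∀ y ∈ P, ⁅x, y⁆ ∈ Q}
      add_mem' := fun hx hx' y hy => by rw [add_lie]; exact add_mem (hx y hy) (hx' y hy)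
      zero_mem' := fun y _ => by rw [zero_lie]; exact zero_mem Q
      smul_mem' := fun c x hx y hy => by rw [smul_lie]; exact Q.smul_mem c (hx y hy)
      lie_mem' := fun hx hx' y hy => by
        rw [lie_lie]
        exact sub_mem (hx _ (hQP (hx' y hy))) (hx' _ (hQP (hx y hy))) }
  have hK : IsPSubalgebra F pm K := fun x hx y hy => by
    obtain ⟨n, rfl⟩ := Nat.exists_eq_succ_of_ne_zero hp
    rw [hpm, adIter_succ']
    exact adIter_mem (S := Q) (hx y hy) (fun z hz => hx z (hQP hz)) n
  exact pSpan_le hK hS hx y hy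

theorem LieSubalgebra.lie_mem_of_mem_pSpan {p : ℕ} (hpm : ∀ a x : M, ⁅pm a, x⁆ = adIter a p x)
    (hp : p ≠ 0) (R : LieSubalgebra F M) {x y : M} (hx : x ∈ pSpan F pm R)
    (hy : y ∈ pSpan F pm R) : ⁅x, y⁆ ∈ R := by
  have hR : ∀ x ∈ pSpan F pm R, ∀ r ∈ R, ⁅x, r⁆ ∈ R := fun x hx r hr =>
    _root_.lie_mem_of_mem_pSpan hpm hp (P := R.toSubmodule) le_rfl
      (fun s hs r hr => R.lie_mem hs hr) hx hr
  refine _root_.lie_mem_of_mem_pSpan hpm hp (P := (pSpan F pm R).toSubmodule)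
    (Q := R.toSubmodule) subset_pSpan (fun r hr z hz => ?_) hx hy
  rw [← lie_skew]
  exact neg_mem (hR z hz r hr)

end PSpan

def pSpanAd (p : ℕ) (F : Type*) [Field F] (L : Type*) [LieRing L] [LieAlgebra F L] :
    LieSubalgebra F (Module.End F L) :=
  pSpan F (· ^ p) (Set.range (LieAlgebra.ad F L))

section PSpanAd

variable {p : ℕ} {F : Type*} [Field F] {L M : Type*} [LieRing L] [LieAlgebra F L] [LieRing M]
  [LieAlgebra F M]

theorem range_ad_le_pSpanAd :
    LinearMap.range (LieAlgebra.ad F L).toLinearMap ≤ (pSpanAd p F L).toSubmodule := by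
  rintro _ ⟨a, rfl⟩
  exact subset_pSpan ⟨a, rfl⟩

theorem map_pSpan_range_eq_pSpanAd {pm : M → M} (f : M →ₗ⁅F⁆ Module.End F L)
    (hf : ∀ x, f (pm x) = f x ^ p) (j : L →ₗ⁅F⁆ M) (hfj : ∀ a, f (j a) = LieAlgebra.ad F L a) :
    (pSpan F pm (Set.range j)).map f = pSpanAd p F L := by
  rw [map_pSpan f hf, ← Set.range_comp]
  congr
  exact funext hfj

end PSpanAd

section LinearAlgebra

variable {F V W : Type*} [Field F] [AddCommGroup V] [Module F V] [AddCommGroup W] [Module F W]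

theorem LinearMap.exists_section_of_le_range (f : V →ₗ[F] W) {B : Submodule F W}
    (hB : B ≤ LinearMap.range f) : ∃ σ : B →ₗ[F] V, ∀ b, f (σ b) = b := by
  obtain ⟨g, hg⟩ := f.rangeRestrict.exists_rightInverse_of_surjective f.range_rangeRestrict
  refine ⟨g ∘ₗ Submodule.inclusion hB, fun b => ?_⟩
  simpa using congrArg Subtype.val (LinearMap.congr_fun hg (Submodule.inclusion hB b))

theorem Submodule.exists_projection_of_sup_eq_top {G K : Submodule F V} (h : G ⊔ K = ⊤) :
    ∃ π : V →ₗ[F] G, (∀ g : G, π g = g) ∧ ∀ x, x - π x ∈ K := by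
  obtain ⟨W, hdisj, hsup⟩ := IsModularLattice.exists_disjoint_and_sup_eq (inf_le_right : G ⊓ K ≤ K)
  have hWK : W ≤ K := hsup ▸ le_sup_right
  have hcompl : IsCompl G W := by
    refine ⟨Submodule.disjoint_def.2 fun x hxG hxW => ?_, codisjoint_iff.2 (eq_top_iff.2 ?_)⟩
    · exact Submodule.disjoint_def.1 hdisj x ⟨hxG, hWK hxW⟩ hxW
    · rw [← h, ← hsup, ← sup_assoc, sup_inf_self]
  exact ⟨G.projectionOnto W hcompl, G.projectionOnto_apply_left hcompl,
    fun x => hWK (G.sub_projection_mem hcompl x)⟩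

end LinearAlgebra

section BaseChange

open Polynomial

variable {F : Type*} [Field F]

noncomputable def coeffTensor {V : Type*} [AddCommGroup V] [Module F V] (n : ℕ) :
    F[X] ⊗[F] V →ₗ[F] V :=
  TensorProduct.lid F V ∘ₗ TensorProduct.map (lcoeff F n) LinearMap.id

variable {V W : Type*} [AddCommGroup V] [Module F V] [AddCommGroup W] [Module F W]

@[simp] theorem coeffTensor_tmul (n : ℕ) (f : F[X]) (x : V) :
    coeffTensor n (f ⊗ₜ[F] x) = f.coeff n • x := by
  simp [coeffTensor]

theorem coeffTensor_baseChange (f : V →ₗ[F] W) (n : ℕ) (t : F[X] ⊗[F] V) :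
    coeffTensor n (f.baseChange F[X] t) = f (coeffTensor n t) := by
  induction t using TensorProduct.induction_on with
  | zero => simp
  | tmul g x => simp
  | add t₁ t₂ h₁ h₂ => simp [h₁, h₂]

theorem coeffTensor_sum_nsmul_X_pow_tmul {m : ℕ} (s : Fin m → V) (i : Fin m) :
    coeffTensor i (∑ j : Fin m, ((j : ℕ) + 1) • (((X : F[X]) ^ (j : ℕ)) ⊗ₜ[F] s j))
      = ((i : ℕ) + 1) • s i := by
  rw [map_sum, Finset.sum_eq_single i]
  · simp
  · intro j _ hji
    simp [coeff_X_pow, Fin.val_ne_of_ne hji.symm]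
  · simp

variable {M N : Type*} [LieRing M] [LieAlgebra F M] [LieRing N] [LieAlgebra F N]

theorem LieHom.baseChange_adIter (f : M →ₗ⁅F⁆ N) (z : F[X] ⊗[F] M) (n : ℕ)
    (w : F[X] ⊗[F] M) :
    f.toLinearMap.baseChange F[X] (adIter z n w)
      = adIter (f.toLinearMap.baseChange F[X] z) n (f.toLinearMap.baseChange F[X] w) := by
  refine map_adIter _ (fun u v => ?_) z n w
  induction u using TensorProduct.induction_on with
  | zero => rw [zero_lie, map_zero, zero_lie]
  | tmul a x =>
    induction v using TensorProduct.induction_on with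
    | zero => rw [lie_zero, map_zero, lie_zero]
    | tmul b y => simp [LieAlgebra.ExtendScalars.bracket_tmul]
    | add v₁ v₂ h₁ h₂ => rw [lie_add, map_add, h₁, h₂, map_add, lie_add]
  | add u₁ u₂ h₁ h₂ => rw [add_lie, map_add, h₁, h₂, map_add, add_lie]

theorem LieSubalgebra.baseChange_incl_adIter (K : LieSubalgebra F M) (a b : K) (n : ℕ) :
    K.incl.toLinearMap.baseChange F[X]
        (adIter ((X : F[X]) ⊗ₜ[F] a + (1 : F[X]) ⊗ₜ[F] b) n ((1 : F[X]) ⊗ₜ[F] a))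
      = adIter ((X : F[X]) ⊗ₜ[F] (a : M) + (1 : F[X]) ⊗ₜ[F] (b : M)) n
          ((1 : F[X]) ⊗ₜ[F] (a : M)) := by
  rw [LieHom.baseChange_adIter]
  simp

end BaseChange

section Restrict

open Polynomial

variable {p : ℕ} {F : Type*} [Field F] [CharP F p] {M : Type*} [LieRing M] [LieAlgebra F M]
  {pm : M → M}

/-- Up to the unit `j + 1`, `s j` is a coefficient of a polynomial built from `a` and `b` by
brackets. -/
theorem mem_of_adIter_eq_sum (K : LieSubalgebra F M) (a b : K) {s : Fin (p - 1) → M}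
    (hs : adIter ((X : F[X]) ⊗ₜ[F] (a : M) + (1 : F[X]) ⊗ₜ[F] (b : M)) (p - 1)
        ((1 : F[X]) ⊗ₜ[F] (a : M))
      = ∑ j : Fin (p - 1), ((j : ℕ) + 1) • (((X : F[X]) ^ (j : ℕ)) ⊗ₜ[F] s j))
    (j : Fin (p - 1)) : s j ∈ K := by
  have hcoeff : ((j : ℕ) + 1 : F) • s j ∈ K := by
    have h := congrArg (coeffTensor j) (K.baseChange_incl_adIter a b (p - 1))
    rw [coeffTensor_baseChange, hs, coeffTensor_sum_nsmul_X_pow_tmul, ← Nat.cast_smul_eq_nsmul F]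
      at h
    push_cast at h
    exact h ▸ SetLike.coe_mem _
  have hunit : ((j : ℕ) + 1 : F) ≠ 0 := by
    exact_mod_cast (CharP.cast_eq_zero_iff F p _).not.2
      (Nat.not_dvd_of_pos_of_lt (Nat.succ_pos _) (by omega))
  simpa [hunit] using K.smul_mem ((j : ℕ) + 1 : F)⁻¹ hcoeff

theorem IsPMap.restrict (hpm : IsPMap p F M pm) (K : LieSubalgebra F M) (π : M →ₗ[F] K)
    (hπ : ∀ k : K, π k = k) (hcentral : ∀ (x : M) (y : K), ⁅x - π x, (y : M)⁆ = 0) :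
    IsPMap p F K (fun k => π (pm k)) where
  ad_pow a x := by
    apply Subtype.ext
    have hcoe : ((adIter a p x : K) : M) = adIter (a : M) p x :=
      map_adIter _ (fun _ _ => rfl) a p x
    rw [LieSubalgebra.coe_bracket, hcoe, ← hpm.ad_pow, eq_comm, ← sub_eq_zero, ← sub_lie]
    exact hcentral _ x
  smul_pow c a := by
    change π (pm (c • (a : M))) = _
    rw [hpm.smul_pow, map_smul]
  add_pow a b := by
    obtain ⟨s, hs, hsum⟩ := hpm.add_pow a b
    have hsK := mem_of_adIter_eq_sum K a b hs
    refine ⟨fun j => ⟨s j, hsK j⟩, ?_, ?_⟩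
    · apply Module.Flat.lTensor_preserves_injective_linearMap (M := F[X]) K.incl.toLinearMap
        Subtype.val_injective
      rw [← LinearMap.baseChange_eq_ltensor, K.baseChange_incl_adIter, hs, map_sum]
      simp
    · change π (pm ((a : M) + b)) = _
      rw [hsum, map_add, map_add, map_sum]
      exact congrArg _ (Finset.sum_congr rfl fun j _ => hπ ⟨s j, hsK j⟩)

end Restrict

section Coprod

variable {F : Type*} [Field F] {L M N V : Type*} [LieRing L] [LieAlgebra F L] [LieRing M]
  [LieAlgebra F M] [LieRing N] [LieAlgebra F N] [AddCommGroup V] [Module F V]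

def LieHom.codRestrict (K : LieSubalgebra F M) (f : L →ₗ⁅F⁆ M) (h : ∀ a, f a ∈ K) :
    L →ₗ⁅F⁆ K :=
  { f.toLinearMap.codRestrict K.toSubmodule h with
    map_lie' := fun {x y} => Subtype.ext (f.map_lie x y) }

def LieHom.coprodSubalgebra (j : L →ₗ⁅F⁆ M) (σ : V →ₗ[F] M)
    (hj : ∀ x y : M, ⁅x, y⁆ ∈ LinearMap.range j.toLinearMap) : LieSubalgebra F M :=
  { LinearMap.range (j.toLinearMap.coprod σ) with
    lie_mem' := fun _ _ => by
      rw [Submodule.mem_carrier, LinearMap.range_coprod]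
      exact Submodule.mem_sup_left (hj _ _) }

variable (j : L →ₗ⁅F⁆ M) (σ : V →ₗ[F] M) (hj : ∀ x y : M, ⁅x, y⁆ ∈ LinearMap.range j.toLinearMap)

theorem LieHom.finrank_coprodSubalgebra (hinj : Function.Injective (j.toLinearMap.coprod σ)) :
    Module.finrank F (j.coprodSubalgebra σ hj) = Module.finrank F (L × V) :=
  LinearMap.finrank_range_of_inj hinj

theorem LieHom.nonempty_lieEquiv_coprodSubalgebra [FiniteDimensional F L] [FiniteDimensional F V]
    [FiniteDimensional F N] (f : M →ₗ⁅F⁆ N)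
    (hinj : Function.Injective (f.toLinearMap ∘ₗ j.toLinearMap.coprod σ))
    (hdim : Module.finrank F N = Module.finrank F L + Module.finrank F V) :
    Nonempty (j.coprodSubalgebra σ hj ≃ₗ⁅F⁆ N) := by
  have hc : Function.Injective (j.toLinearMap.coprod σ) := fun u v h => hinj (congrArg f h)
  have : FiniteDimensional F (j.coprodSubalgebra σ hj) :=
    LinearMap.finiteDimensional_range (j.toLinearMap.coprod σ)
  let g := f.comp (j.coprodSubalgebra σ hj).incl
  have hg : Function.Injective g := by
    rintro ⟨_, u, rfl⟩ ⟨_, v, rfl⟩ h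
    obtain rfl := hinj h
    rfl
  have hdim' : Module.finrank F (j.coprodSubalgebra σ hj) = Module.finrank F N := by
    rw [j.finrank_coprodSubalgebra σ hj hc, Module.finrank_prod, hdim]
  exact ⟨LieEquiv.ofBijective g
    ⟨hg, (LinearMap.injective_iff_surjective_of_finrank_eq_finrank hdim').1 hg⟩⟩

end Coprod

namespace PEnvelope

section ToEnd

variable {p : ℕ} {F : Type u} [Field F] {L : Type u} [LieRing L] [LieAlgebra F L]
  (E : PEnvelope p F L)

theorem mem_pSpan_range_incl (x : E.carrier) :
    x ∈ pSpan F E.pm (E.incl.range : Set E.carrier) := by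
  rw [LieHom.coe_range, E.generates]
  exact LieSubalgebra.mem_top x

variable [NeZero p]

theorem lie_mem_range_incl (x y : E.carrier) : ⁅x, y⁆ ∈ LinearMap.range E.incl.toLinearMap :=
  E.incl.range.lie_mem_of_mem_pSpan E.isPMap.ad_pow (NeZero.ne p) (E.mem_pSpan_range_incl x)
    (E.mem_pSpan_range_incl y)

/-- The bracket action of `x` on `L`, defined since `[E, E] ⊆ L`. -/
noncomputable def toEndFun (x : E.carrier) : Module.End F L :=
  (LinearEquiv.ofInjective _ E.injective).symm.toLinearMap ∘ₗ
    ((LieAlgebra.ad F E.carrier x) ∘ₗ E.incl.toLinearMap).codRestrict _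
      fun a => E.lie_mem_range_incl x (E.incl a)

theorem incl_toEndFun (x : E.carrier) (a : L) : E.incl (E.toEndFun x a) = ⁅x, E.incl a⁆ :=
  LinearEquiv.ofInjective_symm_apply (f := E.incl.toLinearMap) (h := E.injective) _

noncomputable def toEnd : E.carrier →ₗ⁅F⁆ Module.End F L where
  toFun := E.toEndFun
  map_add' x y := by ext a; apply E.injective; simp [incl_toEndFun, add_lie]
  map_smul' c x := by ext a; apply E.injective; simp [incl_toEndFun, smul_lie]
  map_lie' {x y} := by
    ext a; apply E.injective; simp [incl_toEndFun, Ring.lie_def, lie_lie]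

theorem incl_toEnd (x : E.carrier) (a : L) : E.incl (E.toEnd x a) = ⁅x, E.incl a⁆ :=
  E.incl_toEndFun x a

theorem toEnd_incl (a : L) : E.toEnd (E.incl a) = LieAlgebra.ad F L a := by
  ext b
  apply E.injective
  rw [incl_toEnd, LieAlgebra.ad_apply, LieHom.map_lie]

theorem incl_toEnd_pow (x : E.carrier) (n : ℕ) (a : L) :
    E.incl ((E.toEnd x ^ n) a) = adIter x n (E.incl a) := by
  induction n generalizing a with
  | zero => rfl
  | succ n ih => rw [pow_succ, Module.End.mul_apply, ih, incl_toEnd, adIter_succ']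

theorem toEnd_pm (x : E.carrier) : E.toEnd (E.pm x) = E.toEnd x ^ p := by
  ext a
  apply E.injective
  rw [incl_toEnd, incl_toEnd_pow, E.isPMap.ad_pow]

theorem lie_eq_zero_of_toEnd_eq_zero {x : E.carrier} (hx : E.toEnd x = 0) (y : E.carrier) :
    ⁅x, y⁆ = 0 := by
  rw [← lie_skew, neg_eq_zero]
  refine (Submodule.mem_bot F).1 <| lie_mem_of_mem_pSpan E.isPMap.ad_pow (NeZero.ne p)
    bot_le ?_ (E.mem_pSpan_range_incl y) (Submodule.mem_span_singleton_self x)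
  intro s hs z hz
  obtain ⟨a, rfl⟩ := (E.incl.mem_range s).1 hs
  obtain ⟨c, rfl⟩ := Submodule.mem_span_singleton.1 hz
  rw [Submodule.mem_bot, lie_smul, ← lie_skew, ← incl_toEnd, hx]
  simp

theorem range_toEnd : E.toEnd.range = pSpanAd p F L := by
  rw [LieHom.range_eq_map, ← E.generates]
  exact map_pSpan_range_eq_pSpanAd _ E.toEnd_pm _ E.toEnd_incl

theorem exists_toEnd_section {B : Submodule F (Module.End F L)}
    (hB : B ≤ (pSpanAd p F L).toSubmodule) : ∃ σ : B →ₗ[F] E.carrier, ∀ b, E.toEnd (σ b) = b :=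
  E.toEnd.toLinearMap.exists_section_of_le_range <| by
    rwa [← LieHom.range_toSubmodule, E.range_toEnd]

variable {E} {B : Submodule F (Module.End F L)} {σ : B →ₗ[F] E.carrier}

theorem toEnd_coprod (hσ : ∀ b, E.toEnd (σ b) = b) (u : L × B) :
    E.toEnd (E.incl.toLinearMap.coprod σ u) = LieAlgebra.ad F L u.1 + u.2 := by
  simp [E.toEnd_incl, hσ]

theorem snd_eq_zero_of_toEnd_coprod_eq_zero (hσ : ∀ b, E.toEnd (σ b) = b)
    (hB : Disjoint (LinearMap.range (LieAlgebra.ad F L).toLinearMap) B) {u : L × B}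
    (hu : E.toEnd (E.incl.toLinearMap.coprod σ u) = 0) : u.2 = 0 := by
  rw [toEnd_coprod hσ, add_eq_zero_iff_eq_neg'] at hu
  exact Subtype.ext <| Submodule.disjoint_def.1 hB _ ⟨-u.1, by simp [hu]⟩ u.2.2

theorem injective_coprod (hσ : ∀ b, E.toEnd (σ b) = b)
    (hB : Disjoint (LinearMap.range (LieAlgebra.ad F L).toLinearMap) B) :
    Function.Injective (E.incl.toLinearMap.coprod σ) := by
  refine (injective_iff_map_eq_zero _).2 fun u hu => ?_
  have h₂ := snd_eq_zero_of_toEnd_coprod_eq_zero hσ hB (hu ▸ map_zero E.toEnd)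
  have h₁ : u.1 = 0 := E.injective <| by simpa [h₂] using hu
  exact Prod.ext h₁ h₂

end ToEnd

section Restrict

variable {p : ℕ} [NeZero p] {F : Type u} [Field F] {L : Type u} [LieRing L] [LieAlgebra F L]
  (E : PEnvelope p F L) (K : LieSubalgebra F E.carrier) (hLK : ∀ a, E.incl a ∈ K)
  (π : E.carrier →ₗ[F] K)

theorem pSpan_restrict_eq_top (hπ_toEnd : ∀ x, E.toEnd (x - π x) = 0)
    (hK : ∀ k ∈ K, E.toEnd k = 0 → k ∈ LinearMap.range E.incl.toLinearMap) :
    pSpan F (fun k : K => π (E.pm k)) (Set.range (E.incl.codRestrict K hLK)) = ⊤ := by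
  -- `toEnd` maps the generated `p`-subalgebra `S` onto `pSpanAd ∋ toEnd k`, and on `K` its
  -- kernel lies in `L ⊆ S`.
  set S := pSpan F (fun k : K => π (E.pm k)) (Set.range (E.incl.codRestrict K hLK))
  have hpow : ∀ k : K, E.toEnd (π (E.pm k)) = E.toEnd k ^ p := fun k => by
    rw [← E.toEnd_pm, eq_comm, ← sub_eq_zero, ← map_sub, hπ_toEnd]
  have hmap : S.map (E.toEnd.comp K.incl) = pSpanAd p F L :=
    map_pSpan_range_eq_pSpanAd _ hpow _ E.toEnd_incl
  refine eq_top_iff.2 fun k _ => ?_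
  have hk : E.toEnd k ∈ S.map (E.toEnd.comp K.incl) := by
    rw [hmap, ← E.range_toEnd]
    exact E.toEnd.mem_range_self k
  obtain ⟨h, hh, hhk⟩ := (LieSubalgebra.mem_map _ _ _).1 hk
  obtain ⟨a, ha⟩ := hK _ (k - h).2 (by simpa [sub_eq_zero] using hhk.symm)
  have hkh : k = h + E.incl.codRestrict K hLK a := by
    apply Subtype.ext
    change (k : E.carrier) = h + E.incl.toLinearMap a
    rw [ha]
    exact (add_sub_cancel _ _).symm
  rw [hkh]
  exact add_mem hh (subset_pSpan ⟨a, rfl⟩)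

noncomputable def restrict [CharP F p] (hπ : ∀ k : K, π k = k)
    (hπ_toEnd : ∀ x, E.toEnd (x - π x) = 0)
    (hK : ∀ k ∈ K, E.toEnd k = 0 → k ∈ LinearMap.range E.incl.toLinearMap) :
    PEnvelope p F L where
  carrier := K
  pm k := π (E.pm k)
  isPMap := E.isPMap.restrict K π hπ fun x y => E.lie_eq_zero_of_toEnd_eq_zero (hπ_toEnd x) y
  incl := E.incl.codRestrict K hLK
  injective _ _ h := E.injective (congrArg Subtype.val h)
  generates := E.pSpan_restrict_eq_top K hLK π hπ_toEnd hK

end Restrict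

section Minimal

variable {p : ℕ} [NeZero p] {F : Type u} [Field F] [CharP F p] {L : Type u} [LieRing L]
  [LieAlgebra F L] [FiniteDimensional F L] {E : PEnvelope p F L}
  {B : Submodule F (Module.End F L)}

theorem exists_finrank_eq (hB : Disjoint (LinearMap.range (LieAlgebra.ad F L).toLinearMap) B)
    (hAB : LinearMap.range (LieAlgebra.ad F L).toLinearMap ⊔ B = (pSpanAd p F L).toSubmodule)
    {σ : B →ₗ[F] E.carrier} (hσ : ∀ b, E.toEnd (σ b) = b) :
    ∃ G : PEnvelope p F L, FiniteDimensional F G.carrier ∧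
      Module.finrank F G.carrier = Module.finrank F L + Module.finrank F B := by
  let K := E.incl.coprodSubalgebra σ E.lie_mem_range_incl
  have hsup : K.toSubmodule ⊔ LinearMap.ker E.toEnd.toLinearMap = ⊤ := by
    refine eq_top_iff.2 fun x _ => ?_
    have hx : E.toEnd x ∈ LinearMap.range (LieAlgebra.ad F L).toLinearMap ⊔ B := by
      rw [hAB, ← E.range_toEnd]
      exact E.toEnd.mem_range_self x
    obtain ⟨_, ⟨a, rfl⟩, b, hb, hab⟩ := Submodule.mem_sup.1 hx
    refine Submodule.mem_sup.2 ⟨_, ⟨(a, ⟨b, hb⟩), rfl⟩, _, ?_, add_sub_cancel _ x⟩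
    simp [E.toEnd_incl, hσ, ← hab]
  obtain ⟨π, hπ, hπ_ker⟩ := Submodule.exists_projection_of_sup_eq_top hsup
  have hK : ∀ k ∈ K, E.toEnd k = 0 → k ∈ LinearMap.range E.incl.toLinearMap := by
    rintro _ ⟨⟨a, b⟩, rfl⟩ hu
    obtain rfl : b = 0 := snd_eq_zero_of_toEnd_coprod_eq_zero hσ hB hu
    exact ⟨a, by simp⟩
  have hLK : ∀ a, E.incl a ∈ K := fun a => ⟨(a, 0), by simp⟩
  have : FiniteDimensional F K := LinearMap.finiteDimensional_range _
  refine ⟨E.restrict K hLK π hπ hπ_ker hK, this, ?_⟩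
  change Module.finrank F K = _
  rw [LieHom.finrank_coprodSubalgebra _ _ _ (injective_coprod hσ hB), Module.finrank_prod]

theorem IsMinimal.finrank_eq (hE : E.IsMinimal)
    (hB : Disjoint (LinearMap.range (LieAlgebra.ad F L).toLinearMap) B)
    (hAB : LinearMap.range (LieAlgebra.ad F L).toLinearMap ⊔ B = (pSpanAd p F L).toSubmodule) :
    Module.finrank F E.carrier = Module.finrank F L + Module.finrank F B := by
  have := hE.1
  obtain ⟨σ, hσ⟩ := E.exists_toEnd_section (hAB ▸ le_sup_right)
  obtain ⟨G, hG, hGdim⟩ := exists_finrank_eq hB hAB hσ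
  refine le_antisymm (hGdim ▸ hE.2 G hG) ?_
  simpa [Module.finrank_prod] using
    LinearMap.finrank_le_finrank_of_injective (injective_coprod hσ hB)

theorem IsMinimal.nonempty_lieEquiv (hE : E.IsMinimal)
    (hB : Disjoint (LinearMap.range (LieAlgebra.ad F L).toLinearMap) B)
    (hAB : LinearMap.range (LieAlgebra.ad F L).toLinearMap ⊔ B = (pSpanAd p F L).toSubmodule)
    {M : Type*} [LieRing M] [LieAlgebra F M] (j : L →ₗ⁅F⁆ M) (σ : B →ₗ[F] M)
    (hj : ∀ x y : M, ⁅x, y⁆ ∈ LinearMap.range j.toLinearMap) (f : M →ₗ⁅F⁆ E.carrier)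
    (hfj : ∀ a, f (j a) = E.incl a) (hfσ : ∀ b, E.toEnd (f (σ b)) = b) :
    Nonempty (j.coprodSubalgebra σ hj ≃ₗ⁅F⁆ E.carrier) := by
  have := hE.1
  refine j.nonempty_lieEquiv_coprodSubalgebra σ hj f ?_ (hE.finrank_eq hB hAB)
  have hcomp : f.toLinearMap ∘ₗ j.toLinearMap.coprod σ
      = E.incl.toLinearMap.coprod (f.toLinearMap ∘ₗ σ) := by
    ext <;> simp [hfj]
  rw [hcomp]
  exact injective_coprod hfσ hB

end Minimal

section Diagonal

variable {p : ℕ} [NeZero p] {F : Type u} [Field F] {L : Type u} [LieRing L] [LieAlgebra F L]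
  (E E' : PEnvelope p F L)

def diagonal : LieSubalgebra F (E.carrier × E'.carrier) :=
  pSpan F (Prod.map E.pm E'.pm) (Set.range (E.incl.prod E'.incl))

def diagonalIncl : L →ₗ⁅F⁆ E.diagonal E' :=
  (E.incl.prod E'.incl).codRestrict _ fun _ => subset_pSpan ⟨_, rfl⟩

theorem lie_mem_range_diagonalIncl (x y : E.diagonal E') :
    ⁅x, y⁆ ∈ LinearMap.range (E.diagonalIncl E').toLinearMap := by
  have hpm (a x : E.carrier × E'.carrier) : ⁅Prod.map E.pm E'.pm a, x⁆ = adIter a p x := by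
    ext
    · rw [fst_adIter]
      exact E.isPMap.ad_pow a.1 x.1
    · rw [snd_adIter]
      exact E'.isPMap.ad_pow a.2 x.2
  have hdiag : E.diagonal E'
      = pSpan F (Prod.map E.pm E'.pm) ((E.incl.prod E'.incl).range : Set _) := by
    rw [LieHom.coe_range]
    rfl
  obtain ⟨a, ha⟩ := (E.incl.prod E'.incl).range.lie_mem_of_mem_pSpan hpm (NeZero.ne p)
    (by rw [← hdiag]; exact x.2) (by rw [← hdiag]; exact y.2)
  exact ⟨a, Subtype.ext ha⟩

theorem toEnd_fst_eq_toEnd_snd (x : E.diagonal E') :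
    E.toEnd (x : E.carrier × E'.carrier).1 = E'.toEnd (x : E.carrier × E'.carrier).2 := by
  ext a
  -- `⁅x, (a, a)⁆` is again diagonal, `(c, c)`, and both components read off `c`.
  obtain ⟨c, hc⟩ := E.lie_mem_range_diagonalIncl E' x (E.diagonalIncl E' a)
  have h := congrArg Subtype.val hc
  have h₁ : E.toEnd (x : E.carrier × E'.carrier).1 a = c :=
    E.injective (by rw [incl_toEnd]; exact (congrArg Prod.fst h).symm)
  have h₂ : E'.toEnd (x : E.carrier × E'.carrier).2 a = c :=
    E'.injective (by rw [incl_toEnd]; exact (congrArg Prod.snd h).symm)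
  rw [h₁, h₂]

theorem pSpanAd_le_range_toEnd_fst :
    (pSpanAd p F L).toSubmodule ≤ LinearMap.range
      (E.toEnd.comp ((LieHom.fst F _ _).comp (E.diagonal E').incl)).toLinearMap := by
  rw [← map_pSpan_range_eq_pSpanAd (E.toEnd.comp (LieHom.fst F E.carrier E'.carrier))
    (pm := Prod.map E.pm E'.pm) (fun x => E.toEnd_pm x.1) (E.incl.prod E'.incl) E.toEnd_incl]
  rintro _ ⟨x, hx, rfl⟩
  exact ⟨⟨x, hx⟩, rfl⟩

end Diagonal

end PEnvelope

/-- Any two minimal `p`-envelopes of a finite-dimensional Lie algebra are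
isomorphic as ordinary Lie algebras. -/
theorem minimal_pEnvelopes_isomorphic (p : ℕ) [Fact p.Prime]
    (F : Type u) [Field F] [CharP F p]
    (L : Type u) [LieRing L] [LieAlgebra F L] [FiniteDimensional F L]
    (E E' : PEnvelope p F L) (hE : E.IsMinimal) (hE' : E'.IsMinimal) :
    Nonempty (E.carrier ≃ₗ⁅F⁆ E'.carrier) := by
  obtain ⟨B, hB, hAB⟩ :=
    IsModularLattice.exists_disjoint_and_sup_eq (range_ad_le_pSpanAd (p := p) (F := F) (L := L))
  let π₁ := (LieHom.fst F E.carrier E'.carrier).comp (E.diagonal E').incl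
  let π₂ := (LieHom.snd F E.carrier E'.carrier).comp (E.diagonal E').incl
  obtain ⟨σ, hσ₁⟩ := (E.toEnd.comp π₁).toLinearMap.exists_section_of_le_range
    ((le_sup_right.trans hAB.le).trans (E.pSpanAd_le_range_toEnd_fst E'))
  have hσ₂ (b : B) : E'.toEnd (π₂ (σ b)) = b :=
    (E.toEnd_fst_eq_toEnd_snd E' (σ b)).symm.trans (hσ₁ b)
  obtain ⟨e₁⟩ := hE.nonempty_lieEquiv hB hAB (E.diagonalIncl E') σ
    (E.lie_mem_range_diagonalIncl E') π₁ (fun _ => rfl) hσ₁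
  obtain ⟨e₂⟩ := hE'.nonempty_lieEquiv hB hAB (E.diagonalIncl E') σ
    (E.lie_mem_range_diagonalIncl E') π₂ (fun _ => rfl) hσ₂
  exact ⟨e₁.symm.trans e₂⟩
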